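/- Let n ≥ 3 and let S_n = P_{n-1} ∨ K_1 be the shell graph on n vertices with apex c and path P_{n-1} = (v_1, …, v_{n-1}). For S = {c} ∪ A with A ⊆ V(P_{n-1}), the set S is a mutual-visibility set of S_n if and only if |A| ≤ 2 and the distance in the path P_{n-1} between any two vertices of A is at most 2. -/

import Mathlib

open SimpleGraph Polynomial

/-- Two vertices `u` and `v` are `X`-visible in `G` if some shortest `u`–`v` path
has no internal vertex in `X`, i.e. its support meets `X` only possibly in `{u, v}`. -/
def XVisible {V : Type*} (G : SimpleGraph V) (X : Set V) (u v : V) : Prop :=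
  ∃ p : G.Walk u v, p.IsPath ∧ p.length = G.dist u v ∧
    ∀ w ∈ p.support, w ∈ X → w = u ∨ w = v

/-- `X` is a mutual-visibility set of `G` if every pair of vertices of `X` is `X`-visible. -/
def MutualVisibilitySet {V : Type*} (G : SimpleGraph V) (X : Set V) : Prop :=
  ∀ u ∈ X, ∀ v ∈ X, XVisible G X u v

open Classical in
/-- The visibility polynomial: `∑ m_k x^k` where `m_k` is the number of
mutual-visibility sets of cardinality `k`. -/
noncomputable def visPoly {V : Type*} [Fintype V] (G : SimpleGraph V) : Polynomial ℕ :=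
  ∑ S ∈ Finset.univ.powerset.filter (fun S : Finset V => MutualVisibilitySet G ↑S),
    Polynomial.X ^ S.card

/-- The wheel graph with rim `cycleGraph m` (on `some`-vertices) and hub `none`. -/
def wheelGraph (m : ℕ) : SimpleGraph (Option (Fin m)) :=
  SimpleGraph.fromRel (fun u v =>
    (u = none ∧ v ≠ none) ∨
    ∃ i j : Fin m, u = some i ∧ v = some j ∧ (SimpleGraph.cycleGraph m).Adj i j)

/-- The shell graph with path `pathGraph m` (on `some`-vertices) and apex `none`. -/
def shellGraph (m : ℕ) : SimpleGraph (Option (Fin m)) :=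
  SimpleGraph.fromRel (fun u v =>
    (u = none ∧ v ≠ none) ∨
    ∃ i j : Fin m, u = some i ∧ v = some j ∧ (SimpleGraph.pathGraph m).Adj i j)

/-- The bow graph: apex `none` joined to two disjoint paths of `a` and `b` vertices. -/
def bowGraph (a b : ℕ) : SimpleGraph (Option (Fin a ⊕ Fin b)) :=
  SimpleGraph.fromRel (fun u v =>
    (u = none ∧ v ≠ none) ∨
    (∃ i j : Fin a, u = some (Sum.inl i) ∧ v = some (Sum.inl j) ∧ (SimpleGraph.pathGraph a).Adj i j) ∨
    (∃ i j : Fin b, u = some (Sum.inr i) ∧ v = some (Sum.inr j) ∧ (SimpleGraph.pathGraph b).Adj i j))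

/-- The friendship graph: center `none`; the `i`-th triangle has the two
noncentral vertices `some (i, 0)` and `some (i, 1)`. -/
def friendshipGraph (n : ℕ) : SimpleGraph (Option (Fin n × Fin 2)) :=
  SimpleGraph.fromRel (fun u v =>
    (u = none ∧ v ≠ none) ∨
    ∃ (i : Fin n) (x y : Fin 2), u = some (i, x) ∧ v = some (i, y) ∧ x ≠ y)

/-- The helm graph: a copy of the wheel (the `Sum.inl`-vertices) together with a
pendant vertex `Sum.inr k` attached to each rim vertex `Sum.inl (some k)`. -/
def helmGraph (m : ℕ) : SimpleGraph (Option (Fin m) ⊕ Fin m) :=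
  SimpleGraph.fromRel (fun u v =>
    (∃ x y : Option (Fin m), u = Sum.inl x ∧ v = Sum.inl y ∧ (wheelGraph m).Adj x y) ∨
    (∃ k : Fin m, u = Sum.inl (some k) ∧ v = Sum.inr k))

/-- `W` is a `c_Q`-visible set: `W ⊆ V \ Q`, every pair of vertices of `W` is
`Q`-visible, and `{u, w}` is `Q`-visible for all `u ∈ Q`, `w ∈ W`. -/
def CQVisible {V : Type*} (G : SimpleGraph V) (Q W : Set V) : Prop :=
  W ⊆ Qᶜ ∧ (∀ u ∈ W, ∀ v ∈ W, XVisible G Q u v) ∧ (∀ u ∈ Q, ∀ w ∈ W, XVisible G Q u w)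

/-- An absolute `c_Q`-visible set: a `c_Q`-visible set for which `Q` is moreover a
mutual-visibility set of `G`. -/
def AbsoluteCQVisible {V : Type*} (G : SimpleGraph V) (Q W : Set V) : Prop :=
  CQVisible G Q W ∧ MutualVisibilitySet G Q

/-! The apex sees every path vertex directly, so only two non-adjacent path vertices `v_i, v_j`
need attention. They are at distance 2, through the apex, and a shortest path between them is
`v_i w v_j` for a common neighbour `w`. As the apex belongs to the set, visibility asks for a
common neighbour `w = v_k` on the path with `k ∉ A`, i.e. `|i - j| = 2` and the midpoint is
missing from `A`. Three vertices of `A` violate this for the outer two; for at most two vertices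
it is just the distance bound. -/

namespace SimpleGraph

variable {V : Type*} {G : SimpleGraph V} {u v : V}

lemma dist_eq_two_iff :
    G.dist u v = 2 ↔ u ≠ v ∧ ¬ G.Adj u v ∧ (G.commonNeighbors u v).Nonempty := by
  rw [dist, ENat.toNat_eq_iff two_ne_zero, Nat.cast_ofNat, edist_eq_two_iff]

def BridgedOutside (G : SimpleGraph V) (A : Set V) : Prop :=
  ∀ u ∈ A, ∀ v ∈ A, u ≠ v → ¬ G.Adj u v → ∃ w ∉ A, G.Adj u w ∧ G.Adj w v

lemma BridgedOutside.dist_le_two {A : Set V} (h : G.BridgedOutside A) (hu : u ∈ A)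
    (hv : v ∈ A) : G.dist u v ≤ 2 := by
  by_cases huv : u = v
  · simp [huv]
  by_cases hadj : G.Adj u v
  · simp [dist_eq_one_iff_adj.mpr hadj]
  obtain ⟨w, -, huw, hwv⟩ := h u hu v hv huv hadj
  exact dist_le (.cons huw (.cons hwv .nil))

lemma bridgedOutside_of_card_le_two (hG : G.Preconnected) {A : Finset V} (hcard : A.card ≤ 2)
    (hdist : ∀ u ∈ A, ∀ v ∈ A, G.dist u v ≤ 2) : G.BridgedOutside A := by
  intro u hu v hv huv hadj
  have hdist_ne_zero : G.dist u v ≠ 0 := dist_ne_zero_iff_ne_and_reachable.mpr ⟨huv, hG u v⟩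
  have hdist_ne_one : G.dist u v ≠ 1 := fun h ↦ hadj (dist_eq_one_iff_adj.mp h)
  obtain ⟨-, -, w, hw⟩ := dist_eq_two_iff.mp (show G.dist u v = 2 by
    have := hdist u hu v hv; omega)
  obtain ⟨huw, hvw⟩ := G.mem_commonNeighbors.mp hw
  refine ⟨w, fun hwA ↦ ?_, huw, hvw.symm⟩
  exact absurd hcard (not_le.mpr (Finset.two_lt_card.mpr
    ⟨u, hu, v, hv, w, hwA, huv, huw.ne, hvw.ne⟩))

lemma card_le_two_of_bridgedOutside_pathGraph {m : ℕ} {A : Finset (Fin m)}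
    (h : (pathGraph m).BridgedOutside A) : A.card ≤ 2 := by
  by_contra! hcard
  set f := A.orderEmbOfCardLe hcard
  have hab : (f 0 : ℕ) < f 1 := f.strictMono (by decide)
  have hbc : (f 1 : ℕ) < f 2 := f.strictMono (by decide)
  have hnadj : ¬ (pathGraph m).Adj (f 0) (f 2) := by rw [pathGraph_adj]; omega
  obtain ⟨w, hwA, h0w, hw2⟩ := h (f 0) (A.orderEmbOfCardLe_mem hcard 0) (f 2)
    (A.orderEmbOfCardLe_mem hcard 2) (by simp) hnadj
  rw [pathGraph_adj] at h0w hw2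
  have hw : w = f 1 := Fin.ext (by omega)
  exact hwA (hw ▸ A.orderEmbOfCardLe_mem hcard 1)

end SimpleGraph

section Visibility

variable {V : Type*} {G : SimpleGraph V} {X : Set V} {u v : V}

lemma XVisible.refl (u : V) : XVisible G X u u :=
  ⟨.nil, .nil, by simp, fun w hw _ ↦ .inl (by simpa using hw)⟩

lemma XVisible.of_adj (h : G.Adj u v) : XVisible G X u v :=
  ⟨h.toWalk, by simp [h.ne], by simp [SimpleGraph.dist_eq_one_iff_adj.mpr h],
    fun w hw _ ↦ by simpa using hw⟩

lemma xVisible_iff_of_dist_eq_two (h : G.dist u v = 2) :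
    XVisible G X u v ↔ ∃ w ∉ X, G.Adj u w ∧ G.Adj w v := by
  obtain ⟨huv, -, -⟩ := SimpleGraph.dist_eq_two_iff.mp h
  constructor
  · rintro ⟨p, -, hp, hX⟩
    rw [h] at hp
    match p, hp, hX with
    | .cons huw (.cons hwv .nil), _, hX =>
      refine ⟨_, fun hw ↦ ?_, huw, hwv⟩
      rcases hX _ (by simp) hw with e | e
      exacts [huw.ne' e, hwv.ne e]
  · rintro ⟨w, hwX, huw, hwv⟩
    refine ⟨.cons huw (.cons hwv .nil), ?_, by simp [h], ?_⟩
    · simp [huw.ne, hwv.ne, huv]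
    · intro x hx hxX
      simp only [SimpleGraph.Walk.support_cons, SimpleGraph.Walk.support_nil, List.mem_cons,
        List.not_mem_nil, or_false] at hx
      rcases hx with rfl | rfl | rfl <;> simp_all

end Visibility

section Shell

open SimpleGraph

variable {m : ℕ}

lemma shellGraph_adj_none_some (i : Fin m) : (shellGraph m).Adj none (some i) := by
  simp [shellGraph]

lemma shellGraph_adj_some_some {i j : Fin m} :
    (shellGraph m).Adj (some i) (some j) ↔ (pathGraph m).Adj i j := by
  simp only [shellGraph, fromRel_adj, ne_eq, Option.some.injEq, reduceCtorEq, false_and,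
    exists_and_left, exists_eq_left', false_or]
  exact ⟨fun ⟨_, h⟩ ↦ h.elim id .symm, fun h ↦ ⟨h.ne, .inl h⟩⟩

lemma shellGraph_dist_some_some {i j : Fin m} (hij : i ≠ j) (hadj : ¬ (pathGraph m).Adj i j) :
    (shellGraph m).dist (some i) (some j) = 2 :=
  dist_eq_two_iff.mpr ⟨by simpa using hij, by rwa [shellGraph_adj_some_some],
    none, (shellGraph m).mem_commonNeighbors.mpr ⟨(shellGraph_adj_none_some i).symm,
      (shellGraph_adj_none_some j).symm⟩⟩

lemma xVisible_shellGraph_some_some_iff {A : Set (Fin m)} {i j : Fin m} (hij : i ≠ j)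
    (hadj : ¬ (pathGraph m).Adj i j) :
    XVisible (shellGraph m) (insert none (some '' A)) (some i) (some j) ↔
      ∃ k ∉ A, (pathGraph m).Adj i k ∧ (pathGraph m).Adj k j := by
  rw [xVisible_iff_of_dist_eq_two (shellGraph_dist_some_some hij hadj)]
  constructor
  · rintro ⟨_ | k, hk, hik, hkj⟩
    · simp at hk
    · exact ⟨k, by simpa using hk, shellGraph_adj_some_some.mp hik,
        shellGraph_adj_some_some.mp hkj⟩
  · rintro ⟨k, hk, hik, hkj⟩
    exact ⟨some k, by simpa using hk, shellGraph_adj_some_some.mpr hik,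
      shellGraph_adj_some_some.mpr hkj⟩

lemma mutualVisibilitySet_shellGraph_iff {A : Set (Fin m)} :
    MutualVisibilitySet (shellGraph m) (insert none (some '' A)) ↔
      (pathGraph m).BridgedOutside A := by
  constructor
  · intro h i hi j hj hij hadj
    exact (xVisible_shellGraph_some_some_iff hij hadj).mp (h _ (by simp [hi]) _ (by simp [hj]))
  · rintro h (_ | i) hi (_ | j) hj
    · exact .refl _
    · exact .of_adj (shellGraph_adj_none_some j)
    · exact .of_adj (shellGraph_adj_none_some i).symm
    by_cases hij : i = j
    · exact hij ▸ .refl _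
    by_cases hadj : (pathGraph m).Adj i j
    · exact .of_adj (shellGraph_adj_some_some.mpr hadj)
    exact (xVisible_shellGraph_some_some_iff hij hadj).mpr
      (h i (by simpa using hi) j (by simpa using hj) hij hadj)

end Shell

theorem shell_apex_mutualVisibility_iff_general (n : ℕ)
    (A : Finset (Fin (n - 1))) :
    MutualVisibilitySet (shellGraph (n - 1))
      (insert (none : Option (Fin (n - 1))) (some '' (A : Set (Fin (n - 1))))) ↔
      A.card ≤ 2 ∧ ∀ u ∈ A, ∀ v ∈ A,
        (SimpleGraph.pathGraph (n - 1)).dist u v ≤ 2 := by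
  rw [mutualVisibilitySet_shellGraph_iff]
  exact ⟨fun h ↦ ⟨SimpleGraph.card_le_two_of_bridgedOutside_pathGraph h,
      fun u hu v hv ↦ h.dist_le_two hu hv⟩,
    fun ⟨hcard, hdist⟩ ↦ SimpleGraph.bridgedOutside_of_card_le_two
      (SimpleGraph.pathGraph_preconnected _) hcard hdist⟩

theorem shell_apex_mutualVisibility_iff (n : ℕ) (hn : 3 ≤ n)
    (A : Finset (Fin (n - 1))) :
    MutualVisibilitySet (shellGraph (n - 1))
      (insert (none : Option (Fin (n - 1))) (some '' (A : Set (Fin (n - 1))))) ↔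
      A.card ≤ 2 ∧ ∀ u ∈ A, ∀ v ∈ A,
        (SimpleGraph.pathGraph (n - 1)).dist u v ≤ 2 :=
  shell_apex_mutualVisibility_iff_general n A
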